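/- Let $1\le p<u<\infty$ and $1/u+1/u'=1$. Then $\ell_1(\mathbb{Z}^d)\hookrightarrow \mathcal{X}_{u,p}(\mathbb{Z}^d)\hookrightarrow \ell_{u'}(\mathbb{Z}^d)$, and both embedding operators have operator norm exactly $1$: $\|\lambda\,|\,\mathcal{X}_{u,p}\|\le\|\lambda\,|\,\ell_1\|$ and $\|\lambda\,|\,\ell_{u'}\|\le\|\lambda\,|\,\mathcal{X}_{u,p}\|$ for all sequences $\lambda$, with both bounds sharp. -/

import Mathlib

open scoped ENNReal NNReal BigOperators
open Filter

/-- The unit cube `Q_{0,k}` is contained in the dyadic cube `Q_{-j,m}` of side length `2^j`. -/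
def inDyadic (d j : ℕ) (m k : Fin d → ℤ) : Prop :=
  ∀ i, 2 ^ j * m i ≤ k i ∧ k i < 2 ^ j * (m i + 1)

/-- The Morrey sequence space quasi-norm `‖λ | m_{u,p}(ℤ^d)‖`, with values in `ℝ≥0∞`. -/
noncomputable def morreyNorm (d : ℕ) (u p : ℝ) (lam : (Fin d → ℤ) → ℂ) : ℝ≥0∞ :=
  ⨆ (j : ℕ) (m : Fin d → ℤ),
    ((2 : ℝ≥0∞) ^ (j * d)) ^ (1 / u - 1 / p) *
      (∑' k : {k : Fin d → ℤ // inDyadic d j m k}, (‖lam k.1‖₊ : ℝ≥0∞) ^ p) ^ (1 / p)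

/-- The `ℓ_r(ℤ^d)` norm. -/
noncomputable def lpNorm (d : ℕ) (r : ℝ) (lam : (Fin d → ℤ) → ℂ) : ℝ≥0∞ :=
  (∑' k : Fin d → ℤ, (‖lam k‖₊ : ℝ≥0∞) ^ r) ^ (1 / r)

/-- The `ℓ_∞(ℤ^d)` norm. -/
noncomputable def lInftyNorm (d : ℕ) (lam : (Fin d → ℤ) → ℂ) : ℝ≥0∞ :=
  ⨆ k : Fin d → ℤ, (‖lam k‖₊ : ℝ≥0∞)

/-- The weak Lorentz `ℓ_{u,∞}(ℤ^d)` norm, via the distribution function. -/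
noncomputable def weakNorm (d : ℕ) (u : ℝ) (lam : (Fin d → ℤ) → ℂ) : ℝ≥0∞ :=
  ⨆ t : ℝ≥0, (t : ℝ≥0∞) *
    (∑' _ : {k : Fin d → ℤ // (t : ℝ) < ‖lam k‖}, (1 : ℝ≥0∞)) ^ (1 / u)

/-- The norm of the level-`j` space `X^{(j)}_{u,p}(ℤ^d)`. -/
noncomputable def XjNorm (d : ℕ) (u p p' : ℝ) (j : ℕ) (lam : (Fin d → ℤ) → ℂ) : ℝ≥0∞ :=
  ((2 : ℝ≥0∞) ^ (j * d)) ^ (1 / p - 1 / u) *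
    ∑' m : Fin d → ℤ,
      (∑' k : {k : Fin d → ℤ // inDyadic d j m k}, (‖lam k.1‖₊ : ℝ≥0∞) ^ p') ^ (1 / p')

/-- The norm of `X_{u,p}(ℤ^d)`: infimum over decompositions `λ = ∑_j λ^{(j)}`. -/
noncomputable def XupNorm (d : ℕ) (u p p' : ℝ) (lam : (Fin d → ℤ) → ℂ) : ℝ≥0∞ :=
  ⨅ (L : ℕ → (Fin d → ℤ) → ℂ) (_ : ∀ k, HasSum (fun j => L j k) (lam k)),
    ∑' j : ℕ, XjNorm d u p p' j (L j)

/-- Membership in `m_{u,p}(ℤ^d)`. -/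
def MemMorrey (d : ℕ) (u p : ℝ) (lam : (Fin d → ℤ) → ℂ) : Prop :=
  morreyNorm d u p lam ≠ ⊤

/-- Membership in `m^{00}_{u,p}(ℤ^d)`, the closure of the finitely supported sequences. -/
def MemMorrey00 (d : ℕ) (u p : ℝ) (lam : (Fin d → ℤ) → ℂ) : Prop :=
  MemMorrey d u p lam ∧
    ∀ ε : ℝ≥0∞, 0 < ε → ∃ mu : (Fin d → ℤ) → ℂ,
      (Function.support mu).Finite ∧ morreyNorm d u p (lam - mu) < ε

/-- `Q_{-ν,m} ⊆ Q_{-j,0}` for dyadic cubes. -/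
def subCube (d j ν : ℕ) (m : Fin d → ℤ) : Prop :=
  ν ≤ j ∧ ∀ i, 0 ≤ m i ∧ 2 ^ ν * (m i + 1) ≤ 2 ^ j

/-- Norm of the finite-dimensional Morrey space `m^{2^{jd}}_{u,p}` on the cube `Q_{-j,0}`. -/
noncomputable def finMorreyNorm (d : ℕ) (u p : ℝ) (j : ℕ) (lam : (Fin d → ℤ) → ℂ) : ℝ≥0∞ :=
  ⨆ (ν : ℕ) (m : Fin d → ℤ) (_ : subCube d j ν m),
    ((2 : ℝ≥0∞) ^ (ν * d)) ^ (1 / u - 1 / p) *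
      (∑' k : {k : Fin d → ℤ // inDyadic d ν m k}, (‖lam k.1‖₊ : ℝ≥0∞) ^ p) ^ (1 / p)

/-- Operator norm of `id_j : m^{2^{jd}}_{u₁,p₁} → m^{2^{jd}}_{u₂,p₂}`. -/
noncomputable def morreyOpNorm (d : ℕ) (u₁ p₁ u₂ p₂ : ℝ) (j : ℕ) : ℝ≥0∞ :=
  ⨆ (lam : (Fin d → ℤ) → ℂ) (_ : finMorreyNorm d u₁ p₁ j lam ≤ 1),
    finMorreyNorm d u₂ p₂ j lam

/-! At level `j = 0` the cubes are single points and `‖·‖^{(0)}_{u,p}` is the `ℓ₁` norm, so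
putting all of `λ` at that level gives `ℓ₁ ↪ X_{u,p}`. Conversely `1/u' - 1/p' = 1/p - 1/u`, so
Hölder's inequality on a cube with `2^{jd}` points gives
`‖λ‖_{ℓ_{u'}(Q)} ≤ 2^{jd(1/p-1/u)} ‖λ‖_{ℓ_{p'}(Q)}`; summing over the cubes (using `u' ≥ 1`)
yields `‖λ‖_{u'} ≤ ‖λ‖^{(j)}_{u,p}`, and Minkowski's inequality for series in `ℓ_{u'}` passes
this to any decomposition `λ = ∑_j λ^{(j)}`. The unit sequence at the origin has norm `1` in all
three spaces, so both constants are sharp. -/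

section SequenceNorms

open MeasureTheory Filter

lemma eLpNorm'_count_eq_tsum {α E : Type*} [MeasurableSpace α] [MeasurableSingletonClass α]
    [NormedAddCommGroup E] (f : α → E) (r : ℝ) :
    eLpNorm' f r Measure.count = (∑' a, (‖f a‖₊ : ℝ≥0∞) ^ r) ^ (1 / r) := by
  rw [eLpNorm'_eq_lintegral_enorm, lintegral_count]
  rfl

lemma tsum_nnnorm_rpow_rpow_le_of_hasSum {α E : Type*} [Countable α] [NormedAddCommGroup E] {r : ℝ}
    (hr : 1 ≤ r) {f : ℕ → α → E} {g : α → E} (hfg : ∀ a, HasSum (fun n => f n a) (g a)) :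
    (∑' a, (‖g a‖₊ : ℝ≥0∞) ^ r) ^ (1 / r) ≤
      ∑' n, (∑' a, (‖f n a‖₊ : ℝ≥0∞) ^ r) ^ (1 / r) := by
  let _ : MeasurableSpace α := ⊤
  simp only [← eLpNorm'_count_eq_tsum]
  calc eLpNorm' g r Measure.count
      ≤ liminf (fun n => eLpNorm' (∑ i ∈ Finset.range n, f i) r Measure.count) atTop :=
        Lp.eLpNorm'_lim_le_liminf_eLpNorm' (by linarith) (fun _ => .of_discrete)
          (ae_of_all _ fun a => by simpa only [Finset.sum_apply] using (hfg a).tendsto_sum_nat)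
    _ ≤ liminf (fun n => ∑ i ∈ Finset.range n, eLpNorm' (f i) r Measure.count) atTop :=
        liminf_le_liminf (Eventually.of_forall fun n =>
          eLpNorm'_sum_le (fun _ _ => .of_discrete) hr)
    _ = ∑' n, eLpNorm' (f n) r Measure.count := ENNReal.tsum_eq_liminf_sum_nat.symm

lemma tsum_nnnorm_rpow_rpow_le_natCard_rpow_mul {ι E : Type*} [Finite ι] [NormedAddCommGroup E]
    {q r : ℝ} (hq : 0 < q) (hqr : q ≤ r) (f : ι → E) :
    (∑' i, (‖f i‖₊ : ℝ≥0∞) ^ q) ^ (1 / q) ≤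
      (Nat.card ι : ℝ≥0∞) ^ (1 / q - 1 / r) * (∑' i, (‖f i‖₊ : ℝ≥0∞) ^ r) ^ (1 / r) := by
  let _ : MeasurableSpace ι := ⊤
  simp only [← eLpNorm'_count_eq_tsum]
  rw [← ENat.toENNReal_coe, ← ENat.card_eq_coe_natCard, ← Measure.count_univ, mul_comm]
  exact eLpNorm'_le_eLpNorm'_mul_rpow_measure_univ hq hqr .of_discrete

lemma ENNReal.rpow_tsum_le_tsum_rpow {α : Type*} {q : ℝ} (hq0 : 0 < q) (hq1 : q ≤ 1)
    (x : α → ℝ≥0∞) : (∑' a, x a) ^ q ≤ ∑' a, x a ^ q := by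
  have hfin (s : Finset α) : (∑ a ∈ s, x a) ^ q ≤ ∑ a ∈ s, x a ^ q := by
    induction s using Finset.cons_induction with
    | empty => simp [ENNReal.zero_rpow_of_pos hq0]
    | cons a s ha ih =>
      rw [Finset.sum_cons, Finset.sum_cons]
      exact (ENNReal.rpow_add_le_add_rpow _ _ hq0.le hq1).trans (add_le_add_right ih _)
  rw [ENNReal.tsum_eq_iSup_sum, ← ENNReal.orderIsoRpow_apply q hq0, OrderIso.map_iSup]
  exact iSup_le fun s => (hfin s).trans (ENNReal.sum_le_tsum s)

end SequenceNorms

lemma inDyadic_iff_ediv_eq {d j : ℕ} {m k : Fin d → ℤ} :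
    inDyadic d j m k ↔ (fun i => k i / 2 ^ j) = m := by
  have h2 : (0 : ℤ) < 2 ^ j := by positivity
  simp only [inDyadic, funext_iff, le_antisymm_iff (a := k _ / _), ← Int.lt_add_one_iff,
    Int.ediv_lt_iff_lt_mul h2, Int.le_ediv_iff_mul_le h2, mul_comm (2 ^ j : ℤ)]
  exact forall_congr' fun _ => And.comm

lemma inDyadic_zero_iff {d : ℕ} {m k : Fin d → ℤ} : inDyadic d 0 m k ↔ k = m := by
  simp [inDyadic_iff_ediv_eq]

lemma inDyadic_iff_mem_piFinset {d j : ℕ} {m k : Fin d → ℤ} :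
    inDyadic d j m k ↔
      k ∈ Fintype.piFinset fun i => Finset.Ico (2 ^ j * m i) (2 ^ j * (m i + 1)) := by
  simp [inDyadic]

instance (d j : ℕ) (m : Fin d → ℤ) : Finite {k // inDyadic d j m k} :=
  .of_equiv _ (Equiv.subtypeEquivRight fun _ => inDyadic_iff_mem_piFinset).symm

lemma natCard_inDyadic (d j : ℕ) (m : Fin d → ℤ) :
    Nat.card {k // inDyadic d j m k} = 2 ^ (j * d) := by
  rw [Nat.card_congr (Equiv.subtypeEquivRight fun k => inDyadic_iff_mem_piFinset),
    Nat.card_eq_finsetCard, Fintype.card_piFinset]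
  simp [Int.card_Ico, ← mul_sub, pow_mul, Int.toNat_pow_of_nonneg]

lemma tsum_eq_tsum_tsum_inDyadic (d j : ℕ) (f : (Fin d → ℤ) → ℝ≥0∞) :
    ∑' k, f k = ∑' m, ∑' k : {k // inDyadic d j m k}, f k := by
  let e := (Equiv.sigmaCongrRight fun _ => Equiv.subtypeEquivRight fun _ =>
    inDyadic_iff_ediv_eq).trans (Equiv.sigmaFiberEquiv fun k : Fin d → ℤ => fun i => k i / 2 ^ j)
  rw [← e.tsum_eq (f := f), ENNReal.tsum_sigma']
  rfl

lemma tsum_inDyadic_zero (d : ℕ) (m : Fin d → ℤ) (f : (Fin d → ℤ) → ℝ≥0∞) :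
    ∑' k : {k // inDyadic d 0 m k}, f k = f m := by
  rw [← tsum_singleton m f]
  exact (Equiv.subtypeEquivRight (p := fun k => inDyadic d 0 m k)
    (q := (· ∈ ({m} : Set _))) fun _ => inDyadic_zero_iff).tsum_eq (fun k => f k)

section Xup

variable {d : ℕ} {u p p' u' : ℝ}

lemma XjNorm_zero_right (hp' : 0 < p') (j : ℕ) : XjNorm d u p p' j 0 = 0 := by
  simp [XjNorm, ENNReal.zero_rpow_of_pos hp', hp']

lemma XjNorm_zero_left_eq_lpNorm_one (hp' : 0 < p') (lam : (Fin d → ℤ) → ℂ) :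
    XjNorm d u p p' 0 lam = lpNorm d 1 lam := by
  simp only [XjNorm, lpNorm, tsum_inDyadic_zero d _ fun k => (‖lam k‖₊ : ℝ≥0∞) ^ p']
  simp [← ENNReal.rpow_mul, hp'.ne']

lemma XupNorm_le_XjNorm (hp' : 0 < p') (j : ℕ) (lam : (Fin d → ℤ) → ℂ) :
    XupNorm d u p p' lam ≤ XjNorm d u p p' j lam := by
  refine (iInf₂_le (fun i => if i = j then lam else 0)
    fun k => by simpa [ite_apply] using hasSum_ite_eq j (lam k)).trans_eq ?_
  rw [tsum_eq_single j fun i hi => by simp [hi, XjNorm_zero_right hp']]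
  simp

lemma lpNorm_le_XjNorm (hu' : 1 ≤ u') (hu'p' : u' ≤ p') (hexp : 1 / u' - 1 / p' = 1 / p - 1 / u)
    (j : ℕ) (lam : (Fin d → ℤ) → ℂ) : lpNorm d u' lam ≤ XjNorm d u p p' j lam := by
  have hu'0 : 0 < u' := by linarith
  unfold lpNorm XjNorm
  rw [tsum_eq_tsum_tsum_inDyadic d j, ← ENNReal.tsum_mul_left]
  refine (ENNReal.rpow_tsum_le_tsum_rpow (by positivity)
    ((div_le_one hu'0).mpr hu') _).trans (ENNReal.tsum_le_tsum fun m => ?_)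
  have cube := tsum_nnnorm_rpow_rpow_le_natCard_rpow_mul hu'0 hu'p'
    fun k : {k // inDyadic d j m k} => lam k
  rwa [natCard_inDyadic, hexp, Nat.cast_pow, Nat.cast_ofNat] at cube

lemma lpNorm_le_XupNorm (hu' : 1 ≤ u') (hu'p' : u' ≤ p') (hexp : 1 / u' - 1 / p' = 1 / p - 1 / u)
    (lam : (Fin d → ℤ) → ℂ) : lpNorm d u' lam ≤ XupNorm d u p p' lam :=
  le_iInf₂ fun L hL => (tsum_nnnorm_rpow_rpow_le_of_hasSum hu' hL).trans
    (ENNReal.tsum_le_tsum fun j => lpNorm_le_XjNorm hu' hu'p' hexp j (L j))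

end Xup

lemma lpNorm_single_one (d : ℕ) {r : ℝ} (hr : 0 < r) (k : Fin d → ℤ) :
    lpNorm d r (Pi.single k 1) = 1 := by
  rw [lpNorm, tsum_eq_single k fun k' hk' => by simp [hk', ENNReal.zero_rpow_of_pos hr]]
  simp

lemma one_le_and_le_of_conjExponents {p u p' u' : ℝ} (hp : 1 ≤ p) (hpu : p < u) (hp'pos : 0 < p')
    (hp' : 1 / p + 1 / p' = 1) (hu' : 1 / u + 1 / u' = 1) : 1 ≤ u' ∧ u' ≤ p' := by
  have hp0 : 0 < p := by linarith
  have hip : 1 / p ≤ 1 := (div_le_one hp0).2 hp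
  have hiu : 1 / u < 1 / p := one_div_lt_one_div_of_lt hp0 hpu
  have hiu0 : 0 < 1 / u := one_div_pos.2 (by linarith)
  have hu'0 : 0 < u' := one_div_pos.1 (by linarith)
  exact ⟨(div_le_one hu'0).1 (by linarith), (one_div_le_one_div hp'pos hu'0).1 (by linarith)⟩

theorem l1_embeds_Xup_embeds_lu'_general (d : ℕ) (u p p' u' : ℝ)
    (hp : 1 ≤ p) (hpu : p < u) (hp'pos : 0 < p') (hp' : 1 / p + 1 / p' = 1)
    (hu' : 1 / u + 1 / u' = 1) :
    (∀ lam : (Fin d → ℤ) → ℂ, XupNorm d u p p' lam ≤ lpNorm d 1 lam) ∧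
    (∀ lam : (Fin d → ℤ) → ℂ, lpNorm d u' lam ≤ XupNorm d u p p' lam) ∧
    (∀ C : ℝ≥0∞, (∀ lam : (Fin d → ℤ) → ℂ, XupNorm d u p p' lam ≤ C * lpNorm d 1 lam) →
      1 ≤ C) ∧
    (∀ C : ℝ≥0∞, (∀ lam : (Fin d → ℤ) → ℂ, lpNorm d u' lam ≤ C * XupNorm d u p p' lam) →
      1 ≤ C) := by
  obtain ⟨h1u', hu'p'⟩ := one_le_and_le_of_conjExponents hp hpu hp'pos hp' hu'
  have hexp : 1 / u' - 1 / p' = 1 / p - 1 / u := by linarith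
  have upper (lam) : XupNorm d u p p' lam ≤ lpNorm d 1 lam :=
    (XupNorm_le_XjNorm hp'pos 0 lam).trans_eq (XjNorm_zero_left_eq_lpNorm_one hp'pos lam)
  have lower (lam) : lpNorm d u' lam ≤ XupNorm d u p p' lam :=
    lpNorm_le_XupNorm h1u' hu'p' hexp lam
  have hδ1 := lpNorm_single_one d one_pos 0
  have hδu' := lpNorm_single_one d (by linarith) 0
  refine ⟨upper, lower, fun C hC => ?_, fun C hC => ?_⟩
  · calc 1 = lpNorm d u' (Pi.single 0 1) := hδu'.symm
      _ ≤ XupNorm d u p p' (Pi.single 0 1) := lower _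
      _ ≤ C := by simpa [hδ1] using hC (Pi.single 0 1)
  · calc 1 = lpNorm d u' (Pi.single 0 1) := hδu'.symm
      _ ≤ C * XupNorm d u p p' (Pi.single 0 1) := hC _
      _ ≤ C := by simpa [hδ1] using mul_le_mul_right (upper (Pi.single 0 1)) C

theorem l1_embeds_Xup_embeds_lu' (d : ℕ) (hd : 0 < d) (u p p' u' : ℝ)
    (hp : 1 ≤ p) (hpu : p < u) (hp'pos : 0 < p') (hp' : 1 / p + 1 / p' = 1)
    (hu' : 1 / u + 1 / u' = 1) :
    (∀ lam : (Fin d → ℤ) → ℂ, XupNorm d u p p' lam ≤ lpNorm d 1 lam) ∧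
    (∀ lam : (Fin d → ℤ) → ℂ, lpNorm d u' lam ≤ XupNorm d u p p' lam) ∧
    (∀ C : ℝ≥0∞, (∀ lam : (Fin d → ℤ) → ℂ, XupNorm d u p p' lam ≤ C * lpNorm d 1 lam) →
      1 ≤ C) ∧
    (∀ C : ℝ≥0∞, (∀ lam : (Fin d → ℤ) → ℂ, lpNorm d u' lam ≤ C * XupNorm d u p p' lam) →
      1 ≤ C) :=
  l1_embeds_Xup_embeds_lu'_general d u p p' u' hp hpu hp'pos hp' hu'
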